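/- Let H be a real Hilbert space, let a : H × H → ℝ be a symmetric bilinear form, let G : H → H satisfy a(G w, v) = ⟨w, v⟩ for all w, v ∈ H, let θ : H → H be a bounded self-adjoint linear operator, and let u ∈ H with ‖u‖ = 1 satisfy G u = λ⁻¹ u for some λ ≠ 0. If v ∈ H satisfies ⟨v, u⟩ = 0 and G(θ v) − ⟨G(θ v), u⟩ u = (μ/λ) v for some μ ∈ ℝ, then (μ/λ)·a(v, w) = ⟨θ v, w − ⟨u, w⟩u⟩ for all w ∈ H. -/

import Mathlib

/-! Since `a (G w) v = ⟪w, v⟫` and `a` is symmetric, `G` is symmetric for the inner product, and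
`a u · = λ ⟪u, ·⟫` on the eigenvector `u`. Pairing the eigenvalue equation with `w` through `a` then
turns `a (G (θ v)) w` into `⟪θ v, w⟫` and the correction term into `⟪θ v, u⟫ ⟪u, w⟫`. -/

open scoped InnerProductSpace

section

variable {H : Type*} [NormedAddCommGroup H] [InnerProductSpace ℝ H]

lemma LinearMap.isSymmetric_of_apply_eq_inner {a : H →ₗ[ℝ] H →ₗ[ℝ] ℝ}
    (hsymm : ∀ v w, a v w = a w v) {G : H →ₗ[ℝ] H} (hG : ∀ w v, a (G w) v = ⟪w, v⟫_ℝ) :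
    G.IsSymmetric := fun x y => by
  rw [real_inner_comm, ← hG y, hsymm, hG]

lemma apply_eq_mul_inner_of_apply_eq_inv_smul {a : H →ₗ[ℝ] H →ₗ[ℝ] ℝ} {G : H →ₗ[ℝ] H}
    (hG : ∀ w v, a (G w) v = ⟪w, v⟫_ℝ) {u : H} {lam : ℝ} (hlam : lam ≠ 0)
    (hGu : G u = lam⁻¹ • u) (w : H) : a u w = lam * ⟪u, w⟫_ℝ := by
  have hu : u = lam • G u := by rw [hGu, smul_inv_smul₀ hlam]
  rw [hu, map_smul, LinearMap.smul_apply, hG, smul_eq_mul, ← hu]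

end

theorem stmt8_general {H : Type*} [NormedAddCommGroup H] [InnerProductSpace ℝ H]
    (a : H →ₗ[ℝ] H →ₗ[ℝ] ℝ) (hsymm : ∀ v w : H, a v w = a w v)
    (G : H →ₗ[ℝ] H) (hG : ∀ w v : H, a (G w) v = inner ℝ w v)
    (θ : H →L[ℝ] H)
    (u : H) (lam : ℝ) (hlam : lam ≠ 0)
    (hGu : G u = lam⁻¹ • u)
    (v : H) (mu : ℝ)
    (heig : G (θ v) - (inner ℝ (G (θ v)) u : ℝ) • u = (mu / lam) • v) :
    ∀ w : H, (mu / lam) * a v w = inner ℝ (θ v) (w - (inner ℝ u w : ℝ) • u) := by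
  intro w
  have hc : ⟪G (θ v), u⟫_ℝ * lam = ⟪θ v, u⟫_ℝ := by
    rw [LinearMap.isSymmetric_of_apply_eq_inner hsymm hG, hGu, inner_smul_right]
    field_simp
  calc (mu / lam) * a v w = a ((mu / lam) • v) w := by simp
    _ = a (G (θ v) - ⟪G (θ v), u⟫_ℝ • u) w := by rw [heig]
    _ = ⟪θ v, w⟫_ℝ - ⟪G (θ v), u⟫_ℝ * (lam * ⟪u, w⟫_ℝ) := by
      simp only [map_sub, map_smul, LinearMap.sub_apply, LinearMap.smul_apply, hG, smul_eq_mul,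
        apply_eq_mul_inner_of_apply_eq_inv_smul hG hlam hGu]
    _ = ⟪θ v, w - ⟪u, w⟫_ℝ • u⟫_ℝ := by
      rw [inner_sub_right, inner_smul_right, ← hc]; ring

theorem stmt8 {H : Type*} [NormedAddCommGroup H] [InnerProductSpace ℝ H]
    (a : H →ₗ[ℝ] H →ₗ[ℝ] ℝ) (hsymm : ∀ v w : H, a v w = a w v)
    (G : H →ₗ[ℝ] H) (hG : ∀ w v : H, a (G w) v = inner ℝ w v)
    (θ : H →L[ℝ] H) (hθ : ∀ v w : H, (inner ℝ (θ v) w : ℝ) = inner ℝ v (θ w))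
    (u : H) (hu : ‖u‖ = 1) (lam : ℝ) (hlam : lam ≠ 0)
    (hGu : G u = lam⁻¹ • u)
    (v : H) (hv : (inner ℝ v u : ℝ) = 0) (mu : ℝ)
    (heig : G (θ v) - (inner ℝ (G (θ v)) u : ℝ) • u = (mu / lam) • v) :
    ∀ w : H, (mu / lam) * a v w = inner ℝ (θ v) (w - (inner ℝ u w : ℝ) • u) :=
  stmt8_general a hsymm G hG θ u lam hlam hGu v mu heig
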